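/- Let K : [0,∞)³ → [0,∞) be measurable, symmetric in its first two arguments, and bounded by Λ. Then for any two probability measures μ, ν on [0,∞) and any bounded measurable f with ‖f‖_∞ ≤ 1, one has |⟨f, Q(μ)⟩ − ⟨f, Q(ν)⟩| ≤ 24 Λ ‖μ − ν‖_TV, where ‖·‖_TV denotes the total variation norm. -/

import Mathlib

/-!
Write `⟨f, Q(μ)⟩` as half the integral of the collision integrand `g`, a measurable function with
`|g| ≤ 4Λ`, against `μ ⊗ μ ⊗ μ`, and replace the three factors by `ν` one at a time. By Fubini each
replacement changes the integral by `|∫ h dμ - ∫ h dν|` for some `h` with `|h| ≤ 4Λ`, which is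
at most `4Λ ‖μ - ν‖_TV` (pair `h` with the signed measure `μ - ν`). This gives the constant
`6Λ ≤ 24Λ`.
-/

open MeasureTheory Set Classical

noncomputable section

/-- The collision domain `D = {(ω₁,ω₂,ω₃) ∈ [0,∞)³ : ω₁ + ω₂ ≥ ω₃}`. -/
def Ddom : Set (ℝ × ℝ × ℝ) :=
  {p | 0 ≤ p.1 ∧ 0 ≤ p.2.1 ∧ 0 ≤ p.2.2 ∧ p.2.2 ≤ p.1 + p.2.1}

/-- Integrand of the weak collision operator (with the indicator of `D` built in). -/
def collisionIntegrand (K : ℝ → ℝ → ℝ → ℝ) (f : ℝ → ℝ) (p : ℝ × ℝ × ℝ) : ℝ :=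
  if p ∈ Ddom then
    (f (p.1 + p.2.1 - p.2.2) + f p.2.2 - f p.2.1 - f p.1) * K p.1 p.2.1 p.2.2
  else 0

/-- `⟨f, Q(μ)⟩`. -/
def Qpair (K : ℝ → ℝ → ℝ → ℝ) (μ : Measure ℝ) (f : ℝ → ℝ) : ℝ :=
  (1 / 2) * ∫ p, collisionIntegrand K f p ∂(μ.prod (μ.prod μ))

section ProductMeasures

variable {α β : Type*} [MeasurableSpace α] [MeasurableSpace β]

theorem abs_integral_le_of_abs_le (ρ : Measure α) [IsProbabilityMeasure ρ] {h : α → ℝ} {C : ℝ}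
    (hC : ∀ x, |h x| ≤ C) : |∫ x, h x ∂ρ| ≤ C := by
  simpa using norm_integral_le_of_norm_le_const (μ := ρ) (f := h) (ae_of_all _ hC)

theorem abs_integral_sub_le_totalVariation (μ ν : Measure α) [IsFiniteMeasure μ]
    [IsFiniteMeasure ν] {h : α → ℝ} (hm : Measurable h) {C : ℝ} (hC : ∀ x, |h x| ≤ C) :
    |∫ x, h x ∂μ - ∫ x, h x ∂ν| ≤
      C * ((μ.toSignedMeasure - ν.toSignedMeasure).totalVariation univ).toReal := by
  let s := μ.toSignedMeasure - ν.toSignedMeasure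
  have hint : ∀ (ρ : Measure α) [IsFiniteMeasure ρ], ρ.toSignedMeasure.Integrable h :=
    fun ρ _ => by
      simp only [VectorMeasure.Integrable, Measure.variation_toSignedMeasure]
      exact .of_bound hm.aestronglyMeasurable C (ae_of_all _ hC)
  have : IsFiniteMeasure s.variation := s.totalVariation_eq_variation ▸ inferInstance
  rw [← VectorMeasure.integral_toSignedMeasure, ← VectorMeasure.integral_toSignedMeasure,
    ← VectorMeasure.integral_sub_vectorMeasure (hint μ) (hint ν),
    SignedMeasure.totalVariation_eq_variation]
  simpa [ContinuousLinearMap.opNorm_flip, ContinuousLinearMap.opNorm_lsmul, measureReal_def] using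
    VectorMeasure.norm_integral_le_of_norm_le_const (B := (ContinuousLinearMap.lsmul ℝ ℝ).flip)
      (μ := s) (f := h) (ae_of_all _ fun x => (Real.norm_eq_abs (h x)).trans_le (hC x))

variable {g : α × β → ℝ} {C : ℝ}

theorem abs_integral_prod_left_sub_le (μ ν : Measure α) [IsFiniteMeasure μ] [IsFiniteMeasure ν]
    (κ : Measure β) [IsProbabilityMeasure κ] (hg : Measurable g) (hC : ∀ p, |g p| ≤ C) :
    |∫ p, g p ∂(μ.prod κ) - ∫ p, g p ∂(ν.prod κ)| ≤
      C * ((μ.toSignedMeasure - ν.toSignedMeasure).totalVariation univ).toReal := by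
  rw [integral_prod g (.of_bound hg.aestronglyMeasurable C (ae_of_all _ hC)),
    integral_prod g (.of_bound hg.aestronglyMeasurable C (ae_of_all _ hC))]
  exact abs_integral_sub_le_totalVariation μ ν
    (hg.stronglyMeasurable.integral_prod_right' (ν := κ)).measurable
    fun x => abs_integral_le_of_abs_le κ fun y => hC (x, y)

theorem abs_integral_prod_right_sub_le_of_fiberwise (κ : Measure α) [IsProbabilityMeasure κ]
    (ρ ρ' : Measure β) [IsProbabilityMeasure ρ] [IsProbabilityMeasure ρ'] (hg : Measurable g)
    (hC : ∀ p, |g p| ≤ C) {B : ℝ} (hB : ∀ x, |∫ y, g (x, y) ∂ρ - ∫ y, g (x, y) ∂ρ'| ≤ B) :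
    |∫ p, g p ∂(κ.prod ρ) - ∫ p, g p ∂(κ.prod ρ')| ≤ B := by
  have hfiber : ∀ (σ : Measure β) [IsProbabilityMeasure σ],
      Integrable (fun x => ∫ y, g (x, y) ∂σ) κ := fun σ _ =>
    .of_bound (hg.stronglyMeasurable.integral_prod_right' (ν := σ)).aestronglyMeasurable C
      (ae_of_all _ fun x => abs_integral_le_of_abs_le σ fun y => hC (x, y))
  rw [integral_prod g (.of_bound hg.aestronglyMeasurable C (ae_of_all _ hC)),
    integral_prod g (.of_bound hg.aestronglyMeasurable C (ae_of_all _ hC)),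
    ← integral_sub (hfiber ρ) (hfiber ρ')]
  exact abs_integral_le_of_abs_le κ hB

theorem abs_integral_prod_right_sub_le (κ : Measure α) [IsProbabilityMeasure κ]
    (μ ν : Measure β) [IsProbabilityMeasure μ] [IsProbabilityMeasure ν] (hg : Measurable g)
    (hC : ∀ p, |g p| ≤ C) :
    |∫ p, g p ∂(κ.prod μ) - ∫ p, g p ∂(κ.prod ν)| ≤
      C * ((μ.toSignedMeasure - ν.toSignedMeasure).totalVariation univ).toReal :=
  abs_integral_prod_right_sub_le_of_fiberwise κ μ ν hg hC fun x =>
    abs_integral_sub_le_totalVariation μ ν (hg.comp measurable_prodMk_left) fun y => hC (x, y)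

end ProductMeasures

theorem abs_integral_prod_prod_sub_le {α : Type*} [MeasurableSpace α] (μ ν : Measure α)
    [IsProbabilityMeasure μ] [IsProbabilityMeasure ν] {g : α × α × α → ℝ} (hg : Measurable g)
    {C : ℝ} (hC : ∀ p, |g p| ≤ C) :
    |∫ p, g p ∂(μ.prod (μ.prod μ)) - ∫ p, g p ∂(ν.prod (ν.prod ν))| ≤
      3 * C * ((μ.toSignedMeasure - ν.toSignedMeasure).totalVariation univ).toReal := by
  set T := ((μ.toSignedMeasure - ν.toSignedMeasure).totalVariation univ).toReal
  have h₁ := abs_integral_prod_left_sub_le μ ν (μ.prod μ) hg hC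
  have h₂ : |∫ p, g p ∂(ν.prod (μ.prod μ)) - ∫ p, g p ∂(ν.prod (ν.prod μ))| ≤ C * T :=
    abs_integral_prod_right_sub_le_of_fiberwise ν _ _ hg hC fun x =>
      abs_integral_prod_left_sub_le μ ν μ (hg.comp measurable_prodMk_left) fun w => hC (x, w)
  have h₃ : |∫ p, g p ∂(ν.prod (ν.prod μ)) - ∫ p, g p ∂(ν.prod (ν.prod ν))| ≤ C * T :=
    abs_integral_prod_right_sub_le_of_fiberwise ν _ _ hg hC fun x =>
      abs_integral_prod_right_sub_le ν μ ν (hg.comp measurable_prodMk_left) fun w => hC (x, w)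
  have := abs_sub_le (∫ p, g p ∂(μ.prod (μ.prod μ))) (∫ p, g p ∂(ν.prod (μ.prod μ)))
    (∫ p, g p ∂(ν.prod (ν.prod ν)))
  have := abs_sub_le (∫ p, g p ∂(ν.prod (μ.prod μ))) (∫ p, g p ∂(ν.prod (ν.prod μ)))
    (∫ p, g p ∂(ν.prod (ν.prod ν)))
  linarith

theorem measurableSet_Ddom : MeasurableSet Ddom := by
  unfold Ddom; measurability

theorem measurable_collisionIntegrand {K : ℝ → ℝ → ℝ → ℝ}
    (hK : Measurable fun p : ℝ × ℝ × ℝ => K p.1 p.2.1 p.2.2) {f : ℝ → ℝ} (hf : Measurable f) :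
    Measurable (collisionIntegrand K f) := by
  unfold collisionIntegrand
  refine .ite measurableSet_Ddom (.mul ?_ hK) measurable_const
  fun_prop

theorem abs_collisionIntegrand_le {K : ℝ → ℝ → ℝ → ℝ} {Λ : ℝ}
    (hK : ∀ ω₁ ω₂ ω₃, 0 ≤ K ω₁ ω₂ ω₃ ∧ K ω₁ ω₂ ω₃ ≤ Λ) {f : ℝ → ℝ} (hf : ∀ ω, |f ω| ≤ 1)
    (p : ℝ × ℝ × ℝ) : |collisionIntegrand K f p| ≤ 4 * Λ := by
  have hΛ : 0 ≤ Λ := (hK 0 0 0).1.trans (hK 0 0 0).2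
  unfold collisionIntegrand
  split_ifs
  · rw [abs_mul, abs_of_nonneg (hK _ _ _).1]
    refine mul_le_mul ?_ (hK _ _ _).2 (hK _ _ _).1 (by norm_num)
    have := abs_le.mp (hf (p.1 + p.2.1 - p.2.2)); have := abs_le.mp (hf p.2.2)
    have := abs_le.mp (hf p.2.1); have := abs_le.mp (hf p.1)
    exact abs_le.mpr ⟨by linarith, by linarith⟩
  · simpa using hΛ

theorem Qpair_tv_stability_general
    (K : ℝ → ℝ → ℝ → ℝ)
    (hKmeas : Measurable fun p : ℝ × ℝ × ℝ => K p.1 p.2.1 p.2.2)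
    (Λ : ℝ) (hKbd : ∀ ω₁ ω₂ ω₃ : ℝ, 0 ≤ K ω₁ ω₂ ω₃ ∧ K ω₁ ω₂ ω₃ ≤ Λ)
    (μ ν : Measure ℝ) [IsProbabilityMeasure μ] [IsProbabilityMeasure ν]
    (f : ℝ → ℝ) (hfmeas : Measurable f) (hfbd : ∀ ω, |f ω| ≤ 1) :
    |Qpair K μ f - Qpair K ν f| ≤
      24 * Λ * ((μ.toSignedMeasure - ν.toSignedMeasure).totalVariation Set.univ).toReal := by
  set T := ((μ.toSignedMeasure - ν.toSignedMeasure).totalVariation Set.univ).toReal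
  have hΛ : 0 ≤ Λ := (hKbd 0 0 0).1.trans (hKbd 0 0 0).2
  have hT : 0 ≤ T := ENNReal.toReal_nonneg
  calc |Qpair K μ f - Qpair K ν f|
      = 1 / 2 * |∫ p, collisionIntegrand K f p ∂(μ.prod (μ.prod μ)) -
          ∫ p, collisionIntegrand K f p ∂(ν.prod (ν.prod ν))| := by
        rw [Qpair, Qpair, ← mul_sub, abs_mul, abs_of_pos one_half_pos]
    _ ≤ 1 / 2 * (3 * (4 * Λ) * T) := by
        gcongr
        exact abs_integral_prod_prod_sub_le μ ν (measurable_collisionIntegrand hKmeas hfmeas)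
          (abs_collisionIntegrand_le hKbd hfbd)
    _ ≤ 24 * Λ * T := by nlinarith [mul_nonneg hΛ hT]

/-- Stability estimate for the collision operator with a bounded kernel:
for probability measures `μ, ν` on `[0,∞)` and `‖f‖_∞ ≤ 1`,
`|⟨f, Q(μ)⟩ − ⟨f, Q(ν)⟩| ≤ 24 Λ ‖μ − ν‖_TV`. -/
theorem Qpair_tv_stability
    (K : ℝ → ℝ → ℝ → ℝ)
    (hKmeas : Measurable fun p : ℝ × ℝ × ℝ => K p.1 p.2.1 p.2.2)
    (hKsymm : ∀ ω₁ ω₂ ω₃ : ℝ, K ω₁ ω₂ ω₃ = K ω₂ ω₁ ω₃)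
    (Λ : ℝ) (hKbd : ∀ ω₁ ω₂ ω₃ : ℝ, 0 ≤ K ω₁ ω₂ ω₃ ∧ K ω₁ ω₂ ω₃ ≤ Λ)
    (μ ν : Measure ℝ) [IsProbabilityMeasure μ] [IsProbabilityMeasure ν]
    (hsuppμ : μ (Set.Iio 0) = 0) (hsuppν : ν (Set.Iio 0) = 0)
    (f : ℝ → ℝ) (hfmeas : Measurable f) (hfbd : ∀ ω, |f ω| ≤ 1) :
    |Qpair K μ f - Qpair K ν f| ≤
      24 * Λ * ((μ.toSignedMeasure - ν.toSignedMeasure).totalVariation Set.univ).toReal :=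
  Qpair_tv_stability_general K hKmeas Λ hKbd μ ν f hfmeas hfbd
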